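/- arXiv:1910.11629 — 8 statements merged into one kernel-verified Lean document; each statement's English description precedes it below -/
import Mathlib

section
/- Let R be an ordinary runner for a signature Σ, i.e., a carrier type |R| together with co-operations coop_op : A_op → (|R| → B_op × |R|) for each operation op of Σ. Then the family of maps r_X : Tree_Σ(X) → St_{|R|}(X) defined by r_X(return x) = fun c => (x, c) and r_X(op(a, κ)) = fun c => r_X(κ (coop_op a c).1) ((coop_op a c).2) is a monad morphism from the tree monad Tree_Σ to the state monad St_{|R|}. -/
/-- An algebraic signature: operation symbols with parameter and arity types. -/
structure Sig where
  Op : Type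
  Par : Op → Type
  Ar : Op → Type

/-- Computation trees over a signature. -/
inductive CTree (σ : Sig) (X : Type) : Type
  | ret : X → CTree σ X
  | node : (op : σ.Op) → σ.Par op → (σ.Ar op → CTree σ X) → CTree σ X

/-- Kleisli extension `f†` of `f : X → CTree σ Y`. -/
def CTree.kext {σ : Sig} {X Y : Type} (f : X → CTree σ Y) : CTree σ X → CTree σ Y
  | .ret x => f x
  | .node op a κ => .node op a fun b => CTree.kext f (κ b)

/-- An ordinary runner for `σ` with carrier (state) `C`:
co-operations `coop op : Par op → (C → Ar op × C)`. -/
structure Runner (σ : Sig) (C : Type) where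
  coop : ∀ op : σ.Op, σ.Par op → C → σ.Ar op × C

/-- The map `r_X : Tree_σ(X) → St_C(X)` induced by a runner. -/
def Runner.run {σ : Sig} {C : Type} (R : Runner σ C) {X : Type} :
    CTree σ X → C → X × C
  | .ret x => fun c => (x, c)
  | .node op a κ => fun c => R.run (κ (R.coop op a c).1) (R.coop op a c).2

/-- The family `r_X` induced by an ordinary runner is a monad morphism from the
tree monad `Tree_σ` to the state monad `St_C(X) = C → X × C` (whose unit is
`x ↦ fun c => (x, c)` and whose Kleisli extension is
`f†(g) = fun c => f (g c).1 (g c).2`). -/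
theorem runner_run_monad_morphism (σ : Sig) (C : Type) (R : Runner σ C) :
    (∀ (X : Type) (x : X),
      R.run (CTree.ret x) = fun c => (x, c)) ∧
    (∀ (X Y : Type) (f : X → CTree σ Y) (t : CTree σ X),
      R.run (CTree.kext f t) = fun c => R.run (f (R.run t c).1) (R.run t c).2) := by
  constructor
  · intro X x; rfl
  · intro X Y f t
    induction t with
    | ret x => rfl
    | node op a κ ih =>
      funext c
      simp [CTree.kext, Runner.run, ih]
end

section
/- Let T be a monad and R a T-runner for a signature Σ. Then the family of maps r_X : Tree_Σ(X) → T X defined by r_X(return x) = η_X(x) and r_X(op(a, κ)) = (r_X ∘ κ)†(coop_op a) is a monad morphism from the tree monad Tree_Σ to T. -/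
/-- The family of maps `r_X : Tree_σ(X) → T X` induced by a `T`-runner
`coop` for `σ`: `r(return x) = η x` and `r(op(a, κ)) = (r ∘ κ)†(coop op a)`. -/
def runT (σ : Sig) (T : Type → Type)
    (eta : (X : Type) → X → T X)
    (kext : (X Y : Type) → (X → T Y) → T X → T Y)
    (coop : ∀ op : σ.Op, σ.Par op → T (σ.Ar op))
    {X : Type} : CTree σ X → T X
  | .ret x => eta X x
  | .node op a κ => kext (σ.Ar op) X (fun b => runT σ T eta kext coop (κ b)) (coop op a)

/-- For a monad `T` and a `T`-runner for `σ`, the induced family `r_X` is a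
monad morphism from the tree monad `Tree_σ` to `T`. -/
theorem runT_monad_morphism (σ : Sig) (T : Type → Type)
    (eta : (X : Type) → X → T X)
    (kext : (X Y : Type) → (X → T Y) → T X → T Y)
    (law1 : ∀ (X Y : Type) (f : X → T Y) (x : X), kext X Y f (eta X x) = f x)
    (law2 : ∀ (X : Type) (t : T X), kext X X (eta X) t = t)
    (law3 : ∀ (X Y Z : Type) (f : X → T Y) (g : Y → T Z) (t : T X),
      kext X Z (fun x => kext Y Z g (f x)) t = kext Y Z g (kext X Y f t))
    (coop : ∀ op : σ.Op, σ.Par op → T (σ.Ar op)) :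
    (∀ (X : Type) (x : X),
      runT σ T eta kext coop (CTree.ret x) = eta X x) ∧
    (∀ (X Y : Type) (f : X → CTree σ Y) (t : CTree σ X),
      runT σ T eta kext coop (CTree.kext f t)
        = kext X Y (fun x => runT σ T eta kext coop (f x)) (runT σ T eta kext coop t)) := by
  refine ⟨fun X x => rfl, fun X Y f t => ?_⟩
  induction t with
  | ret x => simp [CTree.kext, runT, law1]
  | node op a κ ih =>
    simp only [CTree.kext, runT, ← law3]
    congr 1
    funext b
    exact ih b
end

section
/- Let T be a monad, R a T-runner for a signature Σ, and r the induced monad morphism determined by r_X(return x) = η_X(x) and r_X(op(a, κ)) = (r_X ∘ κ)†(coop_op a). Then for every operation op of Σ and every a ∈ A_op, r_{B_op}(op(a, fun b => return b)) = coop_op a; i.e., the runner's co-operations are recovered from its induced monad morphism. -/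
/-- The co-operations of a `T`-runner are recovered from its induced monad
morphism: `r_{B_op}(op(a, fun b => return b)) = coop op a`. -/
theorem runT_recovers_coops (σ : Sig) (T : Type → Type)
    (eta : (X : Type) → X → T X)
    (kext : (X Y : Type) → (X → T Y) → T X → T Y)
    (law1 : ∀ (X Y : Type) (f : X → T Y) (x : X), kext X Y f (eta X x) = f x)
    (law2 : ∀ (X : Type) (t : T X), kext X X (eta X) t = t)
    (law3 : ∀ (X Y Z : Type) (f : X → T Y) (g : Y → T Z) (t : T X),
      kext X Z (fun x => kext Y Z g (f x)) t = kext Y Z g (kext X Y f t))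
    (coop : ∀ op : σ.Op, σ.Par op → T (σ.Ar op)) :
    ∀ (op : σ.Op) (a : σ.Par op),
      runT σ T eta kext coop (CTree.node op a (fun b => CTree.ret b)) = coop op a := by
  intro op a
  simp [runT, law2]
end

section
/- Let T be a monad, Σ a signature, and θ : Tree_Σ → T a monad morphism. Define a T-runner for Σ by coop_op(a) := θ_{B_op}(op(a, fun b => return b)). Then the monad morphism r induced by this runner (determined by r_X(return x) = η_X(x) and r_X(op(a, κ)) = (r_X ∘ κ)†(coop_op a)) equals θ, i.e., r_X(t) = θ_X(t) for every type X and every t ∈ Tree_Σ(X). -/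
/-- Every monad morphism `θ : Tree_σ → T` is recovered as the monad morphism
induced by the `T`-runner with co-operations
`coop op a := θ (op(a, fun b => return b))`. -/
theorem runT_of_morphism_coops_eq (σ : Sig) (T : Type → Type)
    (eta : (X : Type) → X → T X)
    (kext : (X Y : Type) → (X → T Y) → T X → T Y)
    (law1 : ∀ (X Y : Type) (f : X → T Y) (x : X), kext X Y f (eta X x) = f x)
    (law2 : ∀ (X : Type) (t : T X), kext X X (eta X) t = t)
    (law3 : ∀ (X Y Z : Type) (f : X → T Y) (g : Y → T Z) (t : T X),
      kext X Z (fun x => kext Y Z g (f x)) t = kext Y Z g (kext X Y f t))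
    (θ : (X : Type) → CTree σ X → T X)
    (hret : ∀ (X : Type) (x : X), θ X (CTree.ret x) = eta X x)
    (hbind : ∀ (X Y : Type) (f : X → CTree σ Y) (t : CTree σ X),
      θ Y (CTree.kext f t) = kext X Y (fun x => θ Y (f x)) (θ X t)) :
    ∀ (X : Type) (t : CTree σ X),
      runT σ T eta kext
        (fun op a => θ (σ.Ar op) (CTree.node op a (fun b => CTree.ret b))) t
      = θ X t := by
  
  intro X t
  induction t with
  | ret x => simp [runT, hret]
  | node op a κ ih =>
    have h := hbind (σ.Ar op) X κ (CTree.node op a fun b => CTree.ret b)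
    have hk : CTree.kext κ (CTree.node op a fun b => CTree.ret b)
        = CTree.node op a κ := by simp [CTree.kext]
    rw [hk] at h
    simp [runT, ih, h]
end

section
/- For every signature Σ and every monad T, the T-runners for Σ are in bijective correspondence with the monad morphisms from the tree monad Tree_Σ to T: the map sending a runner (coop_op)_op to the induced monad morphism r (determined by r_X(return x) = η_X(x) and r_X(op(a, κ)) = (r_X ∘ κ)†(coop_op a)) is a bijection, with inverse sending a monad morphism θ to the runner with co-operations coop_op(a) := θ_{B_op}(op(a, fun b => return b)). -/
/-- Monad morphisms from the tree monad `Tree_σ` to a monad `(T, eta, kext)`. -/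
def MonadMor (σ : Sig) (T : Type → Type)
    (eta : (X : Type) → X → T X)
    (kext : (X Y : Type) → (X → T Y) → T X → T Y) : Type 1 :=
  { θ : (X : Type) → CTree σ X → T X //
      (∀ (X : Type) (x : X), θ X (CTree.ret x) = eta X x) ∧
      (∀ (X Y : Type) (f : X → CTree σ Y) (t : CTree σ X),
        θ Y (CTree.kext f t) = kext X Y (fun x => θ Y (f x)) (θ X t)) }


/-!
A runner determines a monad morphism because `runT` commutes with Kleisli extension, by
induction on trees using the unit and associativity laws of `T`. Conversely, every tree
`op(a, κ)` is the Kleisli extension `κ†(op(a, return))` of a generic effect, so a monad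
morphism is determined by its values on generic effects, which form a runner; and `runT`
sends the generic effect of `op` to `coop op a` by the right unit law.
-/

section Runners

variable {σ : Sig} {T : Type → Type} {eta : (X : Type) → X → T X}
  {kext : (X Y : Type) → (X → T Y) → T X → T Y}

theorem runT_kext
    (law1 : ∀ (X Y : Type) (f : X → T Y) (x : X), kext X Y f (eta X x) = f x)
    (law3 : ∀ (X Y Z : Type) (f : X → T Y) (g : Y → T Z) (t : T X),
      kext X Z (fun x => kext Y Z g (f x)) t = kext Y Z g (kext X Y f t))
    (coop : ∀ op : σ.Op, σ.Par op → T (σ.Ar op)) {X Y : Type} (f : X → CTree σ Y)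
    (t : CTree σ X) :
    runT σ T eta kext coop (CTree.kext f t)
      = kext X Y (fun x => runT σ T eta kext coop (f x)) (runT σ T eta kext coop t) := by
  induction t with
  | ret x => exact (law1 X Y (fun x => runT σ T eta kext coop (f x)) x).symm
  | node op a κ ih =>
    simp only [CTree.kext, runT, ih]
    exact law3 _ _ _ _ _ _

theorem runT_node_ret (law2 : ∀ (X : Type) (t : T X), kext X X (eta X) t = t)
    (coop : ∀ op : σ.Op, σ.Par op → T (σ.Ar op)) (op : σ.Op) (a : σ.Par op) :
    runT σ T eta kext coop (CTree.node op a fun b => CTree.ret b) = coop op a :=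
  law2 _ _

def MonadMor.ofRunner
    (law1 : ∀ (X Y : Type) (f : X → T Y) (x : X), kext X Y f (eta X x) = f x)
    (law3 : ∀ (X Y Z : Type) (f : X → T Y) (g : Y → T Z) (t : T X),
      kext X Z (fun x => kext Y Z g (f x)) t = kext Y Z g (kext X Y f t))
    (coop : ∀ op : σ.Op, σ.Par op → T (σ.Ar op)) : MonadMor σ T eta kext :=
  ⟨fun _ => runT σ T eta kext coop, fun _ _ => rfl, fun _ _ f t => runT_kext law1 law3 coop f t⟩

def MonadMor.toRunner (θ : MonadMor σ T eta kext) : ∀ op : σ.Op, σ.Par op → T (σ.Ar op) :=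
  fun op a => θ.1 (σ.Ar op) (CTree.node op a fun b => CTree.ret b)

theorem MonadMor.runT_toRunner (θ : MonadMor σ T eta kext) {X : Type} (t : CTree σ X) :
    runT σ T eta kext θ.toRunner t = θ.1 X t := by
  induction t with
  | ret x => exact (θ.2.1 X x).symm
  | node op a κ ih =>
    calc runT σ T eta kext θ.toRunner (CTree.node op a κ)
        = kext (σ.Ar op) X (fun b => θ.1 X (κ b)) (θ.toRunner op a) :=
          congrArg (fun g => kext (σ.Ar op) X g (θ.toRunner op a)) (funext ih)
      _ = θ.1 X (CTree.kext κ (CTree.node op a fun b => CTree.ret b)) := (θ.2.2 _ _ κ _).symm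

theorem MonadMor.toRunner_ofRunner
    (law1 : ∀ (X Y : Type) (f : X → T Y) (x : X), kext X Y f (eta X x) = f x)
    (law2 : ∀ (X : Type) (t : T X), kext X X (eta X) t = t)
    (law3 : ∀ (X Y Z : Type) (f : X → T Y) (g : Y → T Z) (t : T X),
      kext X Z (fun x => kext Y Z g (f x)) t = kext Y Z g (kext X Y f t))
    (coop : ∀ op : σ.Op, σ.Par op → T (σ.Ar op)) :
    (MonadMor.ofRunner law1 law3 coop).toRunner = coop :=
  funext₂ (runT_node_ret law2 coop)

theorem MonadMor.ofRunner_toRunner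
    (law1 : ∀ (X Y : Type) (f : X → T Y) (x : X), kext X Y f (eta X x) = f x)
    (law3 : ∀ (X Y Z : Type) (f : X → T Y) (g : Y → T Z) (t : T X),
      kext X Z (fun x => kext Y Z g (f x)) t = kext Y Z g (kext X Y f t))
    (θ : MonadMor σ T eta kext) :
    MonadMor.ofRunner law1 law3 θ.toRunner = θ :=
  Subtype.ext (funext₂ fun _ => θ.runT_toRunner)

end Runners

/-- `T`-runners for `σ` are in bijective correspondence with monad morphisms
`Tree_σ → T`: the map `F` sending a runner to its induced monad morphism is a
bijection, whose inverse sends a monad morphism `θ` to the runner with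
co-operations `coop op a := θ (op(a, fun b => return b))`. -/
theorem runners_biject_with_monad_morphisms (σ : Sig) (T : Type → Type)
    (eta : (X : Type) → X → T X)
    (kext : (X Y : Type) → (X → T Y) → T X → T Y)
    (law1 : ∀ (X Y : Type) (f : X → T Y) (x : X), kext X Y f (eta X x) = f x)
    (law2 : ∀ (X : Type) (t : T X), kext X X (eta X) t = t)
    (law3 : ∀ (X Y Z : Type) (f : X → T Y) (g : Y → T Z) (t : T X),
      kext X Z (fun x => kext Y Z g (f x)) t = kext Y Z g (kext X Y f t)) :
    ∃ F : (∀ op : σ.Op, σ.Par op → T (σ.Ar op)) → MonadMor σ T eta kext,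
      (∀ coop, (F coop).1 = fun X => runT σ T eta kext coop (X := X)) ∧
      Function.Bijective F ∧
      (∀ θ : MonadMor σ T eta kext,
        F (fun op a => θ.1 (σ.Ar op) (CTree.node op a (fun b => CTree.ret b))) = θ) ∧
      (∀ coop op a,
        (F coop).1 (σ.Ar op) (CTree.node op a (fun b => CTree.ret b)) = coop op a) := by
  refine ⟨MonadMor.ofRunner law1 law3, fun _ => rfl, ⟨?_, ?_⟩,
    MonadMor.ofRunner_toRunner law1 law3, runT_node_ret law2⟩
  · exact Function.LeftInverse.injective (g := MonadMor.toRunner)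
      (MonadMor.toRunner_ofRunner law1 law2 law3)
  · exact Function.RightInverse.surjective (g := MonadMor.toRunner)
      (MonadMor.ofRunner_toRunner law1 law3)
end

section
/- Let C be a type and Σ_C the signature with two operations: getenv with parameter type Unit and arity type C, and setenv with parameter type C and arity type Unit; write setenv(c, t) for the node setenv with parameter c and continuation fun _ => t, and getenv(κ) for the node getenv with parameter () and continuation κ. Let ~ be the smallest equivalence relation on Tree_{Σ_C}(X) that contains all instances of the three state equations — getenv(fun c => setenv(c, t)) ~ t; setenv(c, getenv κ) ~ setenv(c, κ c); setenv(c, setenv(c', t)) ~ setenv(c', t), for all t ∈ Tree_{Σ_C}(X), κ : C → Tree_{Σ_C}(X), and c, c' ∈ C — and that is a congruence with respect to the tree-forming operations (if κ b ~ κ' b for all b then op(a, κ) ~ op(a, κ')). Then the evaluation map eval : Tree_{Σ_C}(X) → (C → X × C), defined by eval(return x) = fun c => (x, c), eval(getenv κ) = fun c => eval(κ c) c, and eval(setenv(c', κ)) = fun c => eval(κ ()) c', respects ~ and induces a bijection between the quotient Tree_{Σ_C}(X)/~ and the state monad St_C(X) = C → X × C. -/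
/-- The two operations of the theory of `C`-valued state. -/
inductive StOp : Type
  | get
  | set

/-- The signature `Σ_C` with `getenv : Unit ⇝ C` and `setenv : C ⇝ Unit`. -/
def sigSt (C : Type) : Sig where
  Op := StOp
  Par := fun op => match op with | .get => Unit | .set => C
  Ar := fun op => match op with | .get => C | .set => Unit

/-- The node `getenv(κ)`. -/
def getenvT {C X : Type} (κ : C → CTree (sigSt C) X) : CTree (sigSt C) X :=
  CTree.node StOp.get () κ

/-- The node `setenv(c, t)`. -/
def setenvT {C X : Type} (c : C) (t : CTree (sigSt C) X) : CTree (sigSt C) X :=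
  CTree.node StOp.set c (fun _ => t)

/-- The smallest congruence on `Tree_{Σ_C}(X)` generated by the three state
equations. -/
inductive StEq (C X : Type) : CTree (sigSt C) X → CTree (sigSt C) X → Prop
  | refl (t : CTree (sigSt C) X) : StEq C X t t
  | symm {t t' : CTree (sigSt C) X} : StEq C X t t' → StEq C X t' t
  | trans {t t' t'' : CTree (sigSt C) X} :
      StEq C X t t' → StEq C X t' t'' → StEq C X t t''
  | congr (op : (sigSt C).Op) (a : (sigSt C).Par op)
      (κ κ' : (sigSt C).Ar op → CTree (sigSt C) X) :
      (∀ b, StEq C X (κ b) (κ' b)) →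
      StEq C X (CTree.node op a κ) (CTree.node op a κ')
  | get_set (t : CTree (sigSt C) X) :
      StEq C X (getenvT (fun c => setenvT c t)) t
  | set_get (c : C) (κ : C → CTree (sigSt C) X) :
      StEq C X (setenvT c (getenvT κ)) (setenvT c (κ c))
  | set_set (c c' : C) (t : CTree (sigSt C) X) :
      StEq C X (setenvT c (setenvT c' t)) (setenvT c' t)

/-- The evaluation map `Tree_{Σ_C}(X) → St_C(X)`. -/
def evalSt {C X : Type} : CTree (sigSt C) X → C → X × C
  | .ret x => fun c => (x, c)
  | .node .get _ κ => fun c => evalSt (κ c) c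
  | .node .set c' κ => fun _ => evalSt (κ ()) c'

lemma evalSt_sound {C X : Type} {t t' : CTree (sigSt C) X} (h : StEq C X t t') :
    evalSt t = evalSt t' := by
  induction h with
  | refl => rfl
  | symm _ ih => exact ih.symm
  | trans _ _ ih1 ih2 => exact ih1.trans ih2
  | congr op a κ κ' _ ih =>
      cases op with
      | get => funext c; simp only [evalSt]; rw [ih c]
      | set => funext c; simp only [evalSt]; rw [ih ()]
  | get_set t => funext c; simp [evalSt, getenvT, setenvT]
  | set_get c κ => funext c'; simp [evalSt, getenvT, setenvT]
  | set_set c c' t => funext c''; simp [evalSt, setenvT]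

namespace StEqAux

variable {C X : Type}

lemma congr_get {κ κ' : C → CTree (sigSt C) X} (h : ∀ c, StEq C X (κ c) (κ' c)) :
    StEq C X (getenvT κ) (getenvT κ') :=
  StEq.congr StOp.get () κ κ' h

lemma congr_set (c : C) {t t' : CTree (sigSt C) X} (h : StEq C X t t') :
    StEq C X (setenvT c t) (setenvT c t') :=
  StEq.congr StOp.set c _ _ (fun _ => h)

/-- `getenv F ~ getenv (fun c => setenv c (F c))`. -/
lemma get_diag (F : C → CTree (sigSt C) X) :
    StEq C X (getenvT F) (getenvT fun c => setenvT c (F c)) := by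
  refine StEq.trans (StEq.symm (StEq.get_set (getenvT F))) ?_
  exact congr_get fun c => StEq.set_get c F

/-- `getenv (fun c => getenv (G c)) ~ getenv (fun c => G c c)`. -/
lemma get_get (G : C → C → CTree (sigSt C) X) :
    StEq C X (getenvT fun c => getenvT (G c)) (getenvT fun c => G c c) := by
  refine StEq.trans (get_diag _) ?_
  refine StEq.trans (congr_get fun c => StEq.set_get c (G c)) ?_
  exact StEq.symm (get_diag _)

/-- `getenv (fun _ => setenv a u) ~ setenv a u`. -/
lemma get_const_set (a : C) (u : CTree (sigSt C) X) :
    StEq C X (getenvT fun _ => setenvT a u) (setenvT a u) := by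
  refine StEq.trans ?_ (StEq.get_set (setenvT a u))
  exact congr_get fun c => StEq.symm (StEq.set_set c a u)

/-- Canonical form of a state computation. -/
def canon (f : C → X × C) : CTree (sigSt C) X :=
  getenvT fun c => setenvT (f c).2 (CTree.ret (f c).1)

lemma evalSt_canon (f : C → X × C) : evalSt (canon f) = f := by
  funext c; simp [canon, evalSt, getenvT, setenvT]

lemma canon_eq (t : CTree (sigSt C) X) : StEq C X t (canon (evalSt t)) := by
  induction t with
  | ret x =>
      simp only [canon, evalSt]
      exact StEq.symm (StEq.get_set _)
  | node op a κ ih =>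
      cases op with
      | get =>
          refine StEq.trans (congr_get (κ := κ) fun c => ih c) ?_
          exact get_get fun c c' =>
            setenvT (evalSt (κ c) c').2 (CTree.ret (evalSt (κ c) c').1)
      | set =>
          refine StEq.trans
            (StEq.congr StOp.set a κ (fun _ => κ ())
              (fun b => by cases b; exact StEq.refl _)) ?_
          refine StEq.trans (congr_set a (ih ())) ?_
          refine StEq.trans (StEq.set_get a _) ?_
          refine StEq.trans (StEq.set_set a _ _) ?_
          simp only [canon, evalSt]
          exact StEq.symm (get_const_set _ _)

end StEqAux

/-- The evaluation map respects the congruence generated by the state equations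
and induces a bijection between the quotient `Tree_{Σ_C}(X)/∼` and the state
monad `St_C(X) = C → X × C`. -/
theorem state_monad_presentation (C X : Type) :
    ∃ h : ∀ t t' : CTree (sigSt C) X, StEq C X t t' → evalSt t = evalSt t',
      Function.Bijective
        (Quot.lift (evalSt (C := C) (X := X)) h :
          Quot (StEq C X) → (C → X × C)) := by
  refine ⟨fun t t' h => evalSt_sound h, ?_, ?_⟩
  · rintro ⟨t⟩ ⟨t'⟩ h
    simp only [Quot.lift] at h
    exact Quot.sound ((StEqAux.canon_eq t).trans
      (h ▸ (StEqAux.canon_eq t').symm))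
  · intro f
    exact ⟨Quot.mk _ (StEqAux.canon f), StEqAux.evalSt_canon f⟩
end

section
/- Let Σ' be a signature and C, E, S, X, Y, E' types; write U(Y) := Tree_{Σ'}(Y + E') and K(X) := C → Tree_{Σ'}(((X + E) × C) + S), and let φ : ((X + E) × C) + S → U(Y) be a finalisation map. If F : K(X) → (C → U(Y)) is any map satisfying the finalisation homomorphism equations — F(unit x) = fun c => φ(inl (inl x, c)); F(raise e) = fun c => φ(inl (inr e, c)); F(kill s) = fun _ => φ(inr s); F(getenv κ) = fun c => F(κ c) c; F(setenv(c', u)) = fun _ => F(u) c'; F(op_K(a, κ)) = fun c => op(a, fun b => F(κ b) c) for all operations op of Σ' — then F(u)(c) = φ†(u c) for all u ∈ K(X) and c ∈ C, where φ† is the Kleisli extension of φ in Tree_{Σ'}. Consequently (finalisation theorem), for every u ∈ K(X) and every initial state w ∈ C there exists a tree t ∈ Tree_{Σ'}(((X + E) × C) + S), namely t = u w, such that F(u)(w) = φ†(t); i.e., the result of running factors through the finalisation map φ. -/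
/-- The kernel monad `K_{C,σ,E,S}(X) := C → Tree_σ(((X + E) × C) + S)`. -/
def KM (σ : Sig) (C E S X : Type) : Type :=
  C → CTree σ (((X ⊕ E) × C) ⊕ S)

/-- Unit of the kernel monad. -/
def KM.unit {σ : Sig} {C E S X : Type} (x : X) : KM σ C E S X :=
  fun c => CTree.ret (Sum.inl (Sum.inl x, c))

/-- Bind of the kernel monad. -/
def KM.bind {σ : Sig} {C E S X Y : Type} (f : X → KM σ C E S Y)
    (u : KM σ C E S X) : KM σ C E S Y :=
  fun c => CTree.kext (fun z => match z with
    | Sum.inl (Sum.inl x, c') => f x c'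
    | Sum.inl (Sum.inr e, c') => CTree.ret (Sum.inl (Sum.inr e, c'))
    | Sum.inr s => CTree.ret (Sum.inr s)) (u c)

/-- Generic effect: read the kernel state. -/
def KM.getenv {σ : Sig} {C E S X : Type} (κ : C → KM σ C E S X) : KM σ C E S X :=
  fun c => κ c c

/-- Generic effect: set the kernel state. -/
def KM.setenv {σ : Sig} {C E S X : Type} (c' : C) (u : KM σ C E S X) : KM σ C E S X :=
  fun _ => u c'

/-- Generic effect: raise an exception. -/
def KM.raise {σ : Sig} {C E S X : Type} (e : E) : KM σ C E S X :=
  fun c => CTree.ret (Sum.inl (Sum.inr e, c))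

/-- Generic effect: send a signal. -/
def KM.kill {σ : Sig} {C E S X : Type} (s : S) : KM σ C E S X :=
  fun _ => CTree.ret (Sum.inr s)

/-- Algebraic operations lifted to the kernel monad. -/
def KM.op {σ : Sig} {C E S X : Type} (op : σ.Op) (a : σ.Par op)
    (κ : σ.Ar op → KM σ C E S X) : KM σ C E S X :=
  fun c => CTree.node op a (fun b => κ b c)

namespace KM

variable {σ : Sig} {C E S X Y E' : Type} {φ : ((X ⊕ E) × C) ⊕ S → CTree σ (Y ⊕ E')}
  {F : KM σ C E S X → C → CTree σ (Y ⊕ E')}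

theorem finalisation_apply_const_ret
    (hunit : ∀ x : X, F (unit x) = fun c => φ (.inl (.inl x, c)))
    (hraise : ∀ e : E, F (raise e) = fun c => φ (.inl (.inr e, c)))
    (hkill : ∀ s : S, F (kill s) = fun _ => φ (.inr s))
    (hset : ∀ (c' : C) (u : KM σ C E S X), F (setenv c' u) = fun _ => F u c')
    (z : ((X ⊕ E) × C) ⊕ S) (c : C) :
    F (fun _ => .ret z) c = φ z := by
  rcases z with ⟨x | e, c'⟩ | s
  · change F (setenv c' (unit x)) c = _
    rw [hset, hunit]
  · change F (setenv c' (raise e)) c = _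
    rw [hset, hraise]
  · change F (kill s) c = _
    rw [hkill]

theorem finalisation_apply_const
    (hunit : ∀ x : X, F (unit x) = fun c => φ (.inl (.inl x, c)))
    (hraise : ∀ e : E, F (raise e) = fun c => φ (.inl (.inr e, c)))
    (hkill : ∀ s : S, F (kill s) = fun _ => φ (.inr s))
    (hset : ∀ (c' : C) (u : KM σ C E S X), F (setenv c' u) = fun _ => F u c')
    (hop : ∀ (op : σ.Op) (a : σ.Par op) (κ : σ.Ar op → KM σ C E S X),
      F (KM.op op a κ) = fun c => .node op a fun b => F (κ b) c)
    (t : CTree σ (((X ⊕ E) × C) ⊕ S)) (c : C) :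
    F (fun _ => t) c = t.kext φ := by
  induction t generalizing c with
  | ret z => exact finalisation_apply_const_ret hunit hraise hkill hset z c
  | node op a κ ih =>
    exact (congrFun (hop op a fun b _ => κ b) c).trans
      (congrArg (CTree.node op a) (funext fun b => ih b c))

theorem finalisation_apply_eq_kext
    (hunit : ∀ x : X, F (unit x) = fun c => φ (.inl (.inl x, c)))
    (hraise : ∀ e : E, F (raise e) = fun c => φ (.inl (.inr e, c)))
    (hkill : ∀ s : S, F (kill s) = fun _ => φ (.inr s))
    (hset : ∀ (c' : C) (u : KM σ C E S X), F (setenv c' u) = fun _ => F u c')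
    (hop : ∀ (op : σ.Op) (a : σ.Par op) (κ : σ.Ar op → KM σ C E S X),
      F (KM.op op a κ) = fun c => .node op a fun b => F (κ b) c)
    (u : KM σ C E S X) (c : C) :
    F u c = (u c).kext φ :=
  calc F u c = F (setenv c u) c := (congrFun (hset c u) c).symm
    _ = (u c).kext φ := finalisation_apply_const hunit hraise hkill hset hop (u c) c

end KM

theorem finalisation_theorem_general (σ' : Sig) (C E S X Y E' : Type)
    (φ : ((X ⊕ E) × C) ⊕ S → CTree σ' (Y ⊕ E'))
    (F : KM σ' C E S X → C → CTree σ' (Y ⊕ E'))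
    (hunit : ∀ x : X, F (KM.unit x) = fun c => φ (Sum.inl (Sum.inl x, c)))
    (hraise : ∀ e : E, F (KM.raise e) = fun c => φ (Sum.inl (Sum.inr e, c)))
    (hkill : ∀ s : S, F (KM.kill s) = fun _ => φ (Sum.inr s))
    (hset : ∀ (c' : C) (u : KM σ' C E S X), F (KM.setenv c' u) = fun _ => F u c')
    (hop : ∀ (op : σ'.Op) (a : σ'.Par op) (κ : σ'.Ar op → KM σ' C E S X),
      F (KM.op op a κ) = fun c => CTree.node op a (fun b => F (κ b) c)) :
    (∀ (u : KM σ' C E S X) (c : C), F u c = CTree.kext φ (u c)) ∧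
    (∀ (u : KM σ' C E S X) (w : C),
      ∃ t : CTree σ' (((X ⊕ E) × C) ⊕ S), t = u w ∧ F u w = CTree.kext φ t) := by
  have h := KM.finalisation_apply_eq_kext hunit hraise hkill hset hop
  exact ⟨h, fun u w => ⟨u w, rfl, h u w⟩⟩

/-- Uniqueness of the finalisation homomorphism and the finalisation theorem:
any map `F : K(X) → (C → U(Y))` satisfying the finalisation homomorphism
equations for a finalisation map `φ` is given by `F(u)(c) = φ†(u c)`;
consequently, running from any initial state `w` factors through the
finalisation map `φ`, via the tree `t = u w`. -/
theorem finalisation_theorem (σ' : Sig) (C E S X Y E' : Type)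
    (φ : ((X ⊕ E) × C) ⊕ S → CTree σ' (Y ⊕ E'))
    (F : KM σ' C E S X → C → CTree σ' (Y ⊕ E'))
    (hunit : ∀ x : X, F (KM.unit x) = fun c => φ (Sum.inl (Sum.inl x, c)))
    (hraise : ∀ e : E, F (KM.raise e) = fun c => φ (Sum.inl (Sum.inr e, c)))
    (hkill : ∀ s : S, F (KM.kill s) = fun _ => φ (Sum.inr s))
    (hget : ∀ κ : C → KM σ' C E S X, F (KM.getenv κ) = fun c => F (κ c) c)
    (hset : ∀ (c' : C) (u : KM σ' C E S X), F (KM.setenv c' u) = fun _ => F u c')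
    (hop : ∀ (op : σ'.Op) (a : σ'.Par op) (κ : σ'.Ar op → KM σ' C E S X),
      F (KM.op op a κ) = fun c => CTree.node op a (fun b => F (κ b) c)) :
    (∀ (u : KM σ' C E S X) (c : C), F u c = CTree.kext φ (u c)) ∧
    (∀ (u : KM σ' C E S X) (w : C),
      ∃ t : CTree σ' (((X ⊕ E) × C) ⊕ S), t = u w ∧ F u w = CTree.kext φ t) :=
  finalisation_theorem_general σ' C E S X Y E' φ F hunit hraise hkill hset hop
end

section
/- In the calculus λ_coop, subtyping preserves skeletons: if X ⊑ Y for value types X and Y, then Xˢ = Yˢ; if X!(Σ,E) ⊑ X'!(Σ',E') for user computation types, then (X!(Σ,E))ˢ = (X'!(Σ',E'))ˢ; and if X!(Σ,E,S,C) ⊑ X'!(Σ',E',S',C') for kernel computation types, then (X!(Σ,E,S,C))ˢ = (X'!(Σ',E',S',C'))ˢ (in particular C = C'). -/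
/-- Ground types of λ_coop, over a set `Base` of base types. -/
inductive GTy (Base : Type) : Type
  | base : Base → GTy Base
  | unit : GTy Base
  | empty : GTy Base
  | prod : GTy Base → GTy Base → GTy Base
  | sum : GTy Base → GTy Base → GTy Base

/-- Value types of λ_coop, over base types `Base`, operation symbols `Ops`,
exception names `Excs`, and signal names `Sigs`.  A user computation type
`Y!(Σ,E)` is represented by the data `(Y, Σ, E)` and a kernel computation type
`Y!(Σ,E,S,C)` by `(Y, Σ, E, S, C)`; these appear in the user and kernel
function type constructors and (for runners) in the runner type constructor. -/
inductive VTy (Base Ops Excs Sigs : Type) : Type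
  | ground : GTy Base → VTy Base Ops Excs Sigs
  | prod : VTy Base Ops Excs Sigs → VTy Base Ops Excs Sigs → VTy Base Ops Excs Sigs
  | sum : VTy Base Ops Excs Sigs → VTy Base Ops Excs Sigs → VTy Base Ops Excs Sigs
  | ufun : VTy Base Ops Excs Sigs → VTy Base Ops Excs Sigs →
      Set Ops → Set Excs → VTy Base Ops Excs Sigs
  | kfun : VTy Base Ops Excs Sigs → VTy Base Ops Excs Sigs →
      Set Ops → Set Excs → Set Sigs → GTy Base → VTy Base Ops Excs Sigs
  | runner : Set Ops → Set Ops → Set Sigs → GTy Base → VTy Base Ops Excs Sigs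

/-- Skeletal value types. -/
inductive STy (Base : Type) : Type
  | ground : GTy Base → STy Base
  | prod : STy Base → STy Base → STy Base
  | sum : STy Base → STy Base → STy Base
  | ufun : STy Base → STy Base → STy Base
  | kfun : STy Base → STy Base → GTy Base → STy Base
  | runner : GTy Base → STy Base

/-- The skeleton `Xˢ` of a value type `X`: erase all effect information.
The skeleton of a user type `X!(Σ,E)` is `Xˢ!` and the skeleton of a kernel
type `X!(Σ,E,S,C)` is `Xˢ @ C`. -/
def skel {Base Ops Excs Sigs : Type} : VTy Base Ops Excs Sigs → STy Base
  | .ground A => .ground A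
  | .prod X Y => .prod (skel X) (skel Y)
  | .sum X Y => .sum (skel X) (skel Y)
  | .ufun X Y _ _ => .ufun (skel X) (skel Y)
  | .kfun X Y _ _ _ C => .kfun (skel X) (skel Y) C
  | .runner _ _ _ C => .runner C

/-- Subtyping of value types of λ_coop (with the user and kernel computation
subtyping inlined in the function type rules). -/
inductive ValSub {Base Ops Excs Sigs : Type} :
    VTy Base Ops Excs Sigs → VTy Base Ops Excs Sigs → Prop
  | ground (A : GTy Base) : ValSub (.ground A) (.ground A)
  | prod {X X' Y Y' : VTy Base Ops Excs Sigs} :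
      ValSub X X' → ValSub Y Y' → ValSub (.prod X Y) (.prod X' Y')
  | sum {X X' Y Y' : VTy Base Ops Excs Sigs} :
      ValSub X X' → ValSub Y Y' → ValSub (.sum X Y) (.sum X' Y')
  | ufun {X X' Y Y' : VTy Base Ops Excs Sigs} {Sg1 Sg2 : Set Ops}
      {E E' : Set Excs} :
      ValSub X' X → ValSub Y Y' → Sg1 ⊆ Sg2 → E ⊆ E' →
      ValSub (.ufun X Y Sg1 E) (.ufun X' Y' Sg2 E')
  | kfun {X X' Y Y' : VTy Base Ops Excs Sigs} {Sg1 Sg2 : Set Ops}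
      {E E' : Set Excs} {S S' : Set Sigs} {C : GTy Base} :
      ValSub X' X → ValSub Y Y' → Sg1 ⊆ Sg2 → E ⊆ E' → S ⊆ S' →
      ValSub (.kfun X Y Sg1 E S C) (.kfun X' Y' Sg2 E' S' C)
  | runner {Sg1 Sg1p Sg2 Sg2p : Set Ops} {S S' : Set Sigs} {C : GTy Base} :
      Sg1p ⊆ Sg1 → Sg2 ⊆ Sg2p → S ⊆ S' →
      ValSub (.runner Sg1 Sg2 S C) (.runner Sg1p Sg2p S' C)

/-- Subtyping of user computation types `X!(Σ,E) ⊑ X'!(Σ',E')`. -/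
def USub {Base Ops Excs Sigs : Type}
    (u u' : VTy Base Ops Excs Sigs × Set Ops × Set Excs) : Prop :=
  ValSub u.1 u'.1 ∧ u.2.1 ⊆ u'.2.1 ∧ u.2.2 ⊆ u'.2.2

/-- Subtyping of kernel computation types `X!(Σ,E,S,C) ⊑ X'!(Σ',E',S',C')`. -/
def KSub {Base Ops Excs Sigs : Type}
    (k k' : VTy Base Ops Excs Sigs × Set Ops × Set Excs × Set Sigs × GTy Base) :
    Prop :=
  ValSub k.1 k'.1 ∧ k.2.1 ⊆ k'.2.1 ∧ k.2.2.1 ⊆ k'.2.2.1 ∧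
    k.2.2.2.1 ⊆ k'.2.2.2.1 ∧ k.2.2.2.2 = k'.2.2.2.2

/-- In λ_coop, subtyping preserves skeletons: `X ⊑ Y` implies `Xˢ = Yˢ`;
`X!(Σ,E) ⊑ X'!(Σ',E')` implies `(X!(Σ,E))ˢ = (X'!(Σ',E'))ˢ` (i.e. `Xˢ = X'ˢ`);
and `X!(Σ,E,S,C) ⊑ X'!(Σ',E',S',C')` implies
`(X!(Σ,E,S,C))ˢ = (X'!(Σ',E',S',C'))ˢ` (i.e. `Xˢ = X'ˢ` and `C = C'`). -/
theorem subtyping_preserves_skeletons (Base Ops Excs Sigs : Type) :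
    (∀ X Y : VTy Base Ops Excs Sigs, ValSub X Y → skel X = skel Y) ∧
    (∀ u u' : VTy Base Ops Excs Sigs × Set Ops × Set Excs,
      USub u u' → skel u.1 = skel u'.1) ∧
    (∀ k k' : VTy Base Ops Excs Sigs × Set Ops × Set Excs × Set Sigs × GTy Base,
      KSub k k' → skel k.1 = skel k'.1 ∧ k.2.2.2.2 = k'.2.2.2.2) := by
  have main : ∀ X Y : VTy Base Ops Excs Sigs, ValSub X Y → skel X = skel Y := by
    intro X Y h
    induction h <;> simp_all [skel]
  exact ⟨main, fun u u' h => main _ _ h.1, fun k k' h => ⟨main _ _ h.1, h.2.2.2.2⟩⟩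
end
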